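/- Let n ≥ 2 and g_1,…,g_{n+2} ∈ ℝ. Define Q : ℝ^n × ℝ^{n+1} → ℝ by Q(x,z) = exp(−g_1 e^{z_1} − Σ_{i=1}^{n}(e^{x_i − z_i} + g_{i+1} e^{z_{i+1} − x_i}) − g_{n+2} e^{−z_{n+1} − x_n}). Then pointwise: (−(1/2)Σ_{i=1}^n ∂²/∂x_i² + g_1 e^{x_1} + Σ_{i=1}^{n−1} g_{i+1} e^{x_{i+1}−x_i} + 2 g_{n+1} g_{n+2} e^{−2x_n}) Q = (−(1/2)Σ_{i=1}^{n+1} ∂²/∂z_i² − (g_1/2) e^{z_1} + (g_1²/2) e^{2z_1} + Σ_{i=1}^{n} g_{i+1} e^{z_{i+1}−z_i} + g_{n+2} e^{−z_{n+1}−z_n}) Q. -/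

import Mathlib

/-!
Write `Q = exp (-Φ)`. The variables interlace as a chain `z₁, x₁, z₂, x₂, …, xₙ, z_{n+1}`, and
`Φ` is a sum of "bonds", one exponential for each pair of neighbours, plus a wall term at each end.
Along any coordinate line `Φ` has the form `a eᵗ + b e⁻ᵗ + c`, so `∂²Q = ((∂Φ)² - ∂²Φ) Q`, and
both Laplacians of `Q` are quadratic polynomials in the bonds times `Q`. Each Toda potential is a
sum of products of adjacent bonds, so the intertwining relation becomes a polynomial identity in
the bonds, whose bulk part telescopes.
-/

/-- Second partial derivative of `f` along the `i`-th coordinate at the point `p`. -/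
noncomputable def pd2 (f : (ℕ → ℝ) → ℝ) (i : ℕ) (p : ℕ → ℝ) : ℝ :=
  deriv (deriv (fun t => f (Function.update p i t))) (p i)

open Finset Real Function

theorem Finset.sum_sub_sum_of_subset {ι M : Type*} [AddCommGroup M] {s T : Finset ι}
    {f f' : ι → M} (hT : T ⊆ s) (h : ∀ j ∈ s, j ∉ T → f j = f' j) :
    ∑ j ∈ s, f j - ∑ j ∈ s, f' j = ∑ j ∈ T, (f j - f' j) := by
  rw [← sum_sub_distrib]
  exact (sum_subset hT fun j hj hjT => sub_eq_zero.mpr (h j hj hjT)).symm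

theorem Finset.sum_Icc_one_succ_eq_add_sum_succ {M : Type*} [AddCommMonoid M] (f : ℕ → M)
    (m : ℕ) : ∑ i ∈ Icc 1 (m + 1), f i = f 1 + ∑ i ∈ Icc 1 m, f (i + 1) := by
  induction m with
  | zero => simp
  | succ m ih => rw [sum_Icc_succ_top (by omega), ih, sum_Icc_succ_top (by omega), add_assoc]

theorem deriv_deriv_exp_comp {ψ ψ' ψ'' : ℝ → ℝ} (h₁ : ∀ t, HasDerivAt ψ (ψ' t) t)
    (h₂ : ∀ t, HasDerivAt ψ' (ψ'' t) t) (t : ℝ) :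
    deriv (deriv fun s => exp (ψ s)) t = (ψ' t ^ 2 + ψ'' t) * exp (ψ t) := by
  have hderiv : deriv (fun s => exp (ψ s)) = fun s => exp (ψ s) * ψ' s :=
    funext fun s => (h₁ s).exp.deriv
  rw [hderiv]
  exact ((h₁ t).exp.mul (h₂ t)).deriv.trans (by ring)

theorem hasDerivAt_mul_exp_add_mul_exp_neg (a b t : ℝ) :
    HasDerivAt (fun s => a * exp s + b * exp (-s)) (a * exp t + -b * exp (-t)) t :=
  (((hasDerivAt_exp t).const_mul a).add
    ((hasDerivAt_neg' t).exp.const_mul b)).congr_deriv (by ring)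

theorem pd2_exp_neg_of_update {Φ : (ℕ → ℝ) → ℝ} {i : ℕ} {p : ℕ → ℝ} (a b : ℝ)
    (h : ∀ t, Φ (update p i t) = Φ p + a * (exp t - exp (p i)) + b * (exp (-t) - exp (-p i))) :
    pd2 (fun q => exp (-Φ q)) i p
      = ((a * exp (p i) - b * exp (-p i)) ^ 2 - (a * exp (p i) + b * exp (-p i)))
          * exp (-Φ p) := by
  set C := a * exp (p i) + b * exp (-p i) - Φ p
  have hline : (fun t => exp (-Φ (update p i t)))
      = fun t => exp (C - (a * exp t + b * exp (-t))) := by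
    funext t; rw [h]; simp only [C]; ring_nf
  unfold pd2
  rw [hline, deriv_deriv_exp_comp (ψ'' := fun t => -(a * exp t + -(-b) * exp (-t)))
    (fun t => (hasDerivAt_mul_exp_add_mul_exp_neg a b t).const_sub C)
    (fun t => (hasDerivAt_mul_exp_add_mul_exp_neg a (-b) t).neg)]
  simp only [C]
  ring_nf

-- `u`, `v`, `u₀`, `w` play the roles of `bondDown`, `bondUp`, `leftBond`, `rightBond` below.
theorem chain_identity (m : ℕ) (u v : ℕ → ℝ) (u₀ w : ℝ) :
    -(1 / 2) * (∑ i ∈ Icc 1 m, ((u i - v i) ^ 2 - (u i + v i))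
        + ((u (m + 1) - v (m + 1) - w) ^ 2 - (u (m + 1) + v (m + 1) + w)))
      + (u₀ * u 1 + ∑ i ∈ Icc 1 m, v i * u (i + 1) + 2 * v (m + 1) * w)
    = -(1 / 2) * (((u₀ - u 1) ^ 2 - (u₀ + u 1))
        + ∑ i ∈ Icc 1 m, ((v i - u (i + 1)) ^ 2 - (v i + u (i + 1)))
        + ((v (m + 1) - w) ^ 2 - (v (m + 1) + w)))
      + (-(u₀ / 2) + u₀ ^ 2 / 2 + ∑ i ∈ Icc 1 (m + 1), u i * v i + u (m + 1) * w) := by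
  have htel : ∑ i ∈ Icc 1 m, (((u i - v i) ^ 2 - (u i + v i))
      - ((v i - u (i + 1)) ^ 2 - (v i + u (i + 1))) - 2 * (v i * u (i + 1)) + 2 * (u i * v i))
      = (u 1 ^ 2 - u 1) - (u (m + 1) ^ 2 - u (m + 1)) := by
    have := sum_Ico_sub (fun i => u i ^ 2 - u i) (by omega : 1 ≤ m + 1)
    rw [Ico_add_one_right_eq_Icc] at this
    rw [← neg_sub, ← this, ← sum_neg_distrib]
    exact sum_congr rfl fun i _ => by ring
  rw [sum_Icc_succ_top (by omega)]
  simp only [sum_add_distrib, sum_sub_distrib, ← mul_sum] at htel ⊢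
  linear_combination (-(1 / 2) : ℝ) * htel

-- `bondDown i` couples `z i` with `x i`, and `bondUp i` couples `x i` with `z (i + 1)`.
noncomputable def leftBond (g z : ℕ → ℝ) : ℝ := g 1 * exp (z 1)

noncomputable def bondDown (x z : ℕ → ℝ) (i : ℕ) : ℝ := exp (x i - z i)

noncomputable def bondUp (g x z : ℕ → ℝ) (i : ℕ) : ℝ := g (i + 1) * exp (z (i + 1) - x i)

noncomputable def rightBond (n : ℕ) (g x z : ℕ → ℝ) : ℝ := g (n + 2) * exp (-z (n + 1) - x n)

noncomputable def bondSum (n : ℕ) (g x z : ℕ → ℝ) : ℝ :=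
  ∑ i ∈ Icc 1 n, (bondDown x z i + bondUp g x z i)

noncomputable def kernelPotential (n : ℕ) (g x z : ℕ → ℝ) : ℝ :=
  leftBond g z + bondSum n g x z + rightBond n g x z

noncomputable def todaPotentialA2n (n : ℕ) (g x : ℕ → ℝ) : ℝ :=
  g 1 * exp (x 1) + ∑ i ∈ Icc 1 (n - 1), g (i + 1) * exp (x (i + 1) - x i)
    + 2 * g (n + 1) * g (n + 2) * exp (-2 * x n)

noncomputable def todaPotentialBC (n : ℕ) (g z : ℕ → ℝ) : ℝ :=
  -(g 1 / 2) * exp (z 1) + g 1 ^ 2 / 2 * exp (2 * z 1)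
    + ∑ i ∈ Icc 1 n, g (i + 1) * exp (z (i + 1) - z i) + g (n + 2) * exp (-z (n + 1) - z n)

section Kernel

variable {n : ℕ} (g x z : ℕ → ℝ) (t : ℝ)

theorem bondSum_update_x {i : ℕ} (h1 : 1 ≤ i) (hi : i ≤ n) :
    bondSum n g (update x i t) z = bondSum n g x z + exp (-z i) * (exp t - exp (x i))
      + g (i + 1) * exp (z (i + 1)) * (exp (-t) - exp (-x i)) := by
  have hdiff : bondSum n g (update x i t) z - bondSum n g x z
      = ∑ j ∈ {i}, (bondDown (update x i t) z j + bondUp g (update x i t) z j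
          - (bondDown x z j + bondUp g x z j)) := by
    refine sum_sub_sum_of_subset (by simp [h1, hi]) fun j _ hj => ?_
    simp [bondDown, bondUp, update_of_ne (by simpa using hj : j ≠ i)]
  simp only [sum_singleton, bondDown, bondUp, update_self, exp_sub] at hdiff
  simp only [exp_neg]
  linear_combination hdiff

theorem bondSum_update_z_one (hn : 1 ≤ n) :
    bondSum n g x (update z 1 t) = bondSum n g x z + exp (x 1) * (exp (-t) - exp (-z 1)) := by
  have hdiff : bondSum n g x (update z 1 t) - bondSum n g x z
      = ∑ j ∈ {1}, (bondDown x (update z 1 t) j + bondUp g x (update z 1 t) j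
          - (bondDown x z j + bondUp g x z j)) := by
    refine sum_sub_sum_of_subset (by simp [hn]) fun j hj hjT => ?_
    have hj : 1 ≤ j := (mem_Icc.mp hj).1
    have hj1 : j ≠ 1 := by simpa using hjT
    simp [bondDown, bondUp, update_of_ne hj1, update_of_ne (by omega : j + 1 ≠ 1)]
  simp only [sum_singleton, bondDown, bondUp, update_self, update_of_ne (by omega : 1 + 1 ≠ 1),
    exp_sub] at hdiff
  simp only [exp_neg]
  linear_combination hdiff

theorem bondSum_update_z_succ {i : ℕ} (h1 : 1 ≤ i) (hi : i < n) :
    bondSum n g x (update z (i + 1) t) = bondSum n g x z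
      + g (i + 1) * exp (-x i) * (exp t - exp (z (i + 1)))
      + exp (x (i + 1)) * (exp (-t) - exp (-z (i + 1))) := by
  have hdiff : bondSum n g x (update z (i + 1) t) - bondSum n g x z
      = ∑ j ∈ {i, i + 1}, (bondDown x (update z (i + 1) t) j + bondUp g x (update z (i + 1) t) j
          - (bondDown x z j + bondUp g x z j)) := by
    refine sum_sub_sum_of_subset (by simp [insert_subset_iff]; omega) fun j _ hj => ?_
    simp only [mem_insert, mem_singleton, not_or] at hj
    simp [bondDown, bondUp, update_of_ne hj.2, update_of_ne (by omega : j + 1 ≠ i + 1)]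
  simp only [sum_pair (by omega : i ≠ i + 1), bondDown, bondUp, update_self,
    update_of_ne (by omega : i ≠ i + 1), update_of_ne (by omega : i + 1 + 1 ≠ i + 1),
    exp_sub] at hdiff
  simp only [exp_neg]
  linear_combination hdiff

theorem bondSum_update_z_last (hn : 1 ≤ n) :
    bondSum n g x (update z (n + 1) t) = bondSum n g x z
      + g (n + 1) * exp (-x n) * (exp t - exp (z (n + 1))) := by
  have hdiff : bondSum n g x (update z (n + 1) t) - bondSum n g x z
      = ∑ j ∈ {n}, (bondDown x (update z (n + 1) t) j + bondUp g x (update z (n + 1) t) j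
          - (bondDown x z j + bondUp g x z j)) := by
    refine sum_sub_sum_of_subset (by simp [hn]) fun j hj hjT => ?_
    have hj : j ≤ n := (mem_Icc.mp hj).2
    have hjn : j ≠ n := by simpa using hjT
    simp [bondDown, bondUp, update_of_ne (by omega : j ≠ n + 1),
      update_of_ne (by omega : j + 1 ≠ n + 1)]
  simp only [sum_singleton, bondDown, bondUp, update_self, update_of_ne (by omega : n ≠ n + 1),
    exp_sub] at hdiff
  simp only [exp_neg]
  linear_combination hdiff

theorem pd2_kernel_x_of_lt {i : ℕ} (h1 : 1 ≤ i) (hi : i < n) :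
    pd2 (fun x' => exp (-kernelPotential n g x' z)) i x
      = ((bondDown x z i - bondUp g x z i) ^ 2 - (bondDown x z i + bondUp g x z i))
          * exp (-kernelPotential n g x z) := by
  rw [pd2_exp_neg_of_update (exp (-z i)) (g (i + 1) * exp (z (i + 1))) fun t => ?_]
  · simp only [bondDown, bondUp, exp_sub, exp_neg]
    ring
  · simp only [kernelPotential, bondSum_update_x g x z t h1 hi.le, rightBond,
      update_of_ne hi.ne']
    ring

theorem pd2_kernel_x_last (hn : 1 ≤ n) :
    pd2 (fun x' => exp (-kernelPotential n g x' z)) n x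
      = ((bondDown x z n - bondUp g x z n - rightBond n g x z) ^ 2
          - (bondDown x z n + bondUp g x z n + rightBond n g x z))
          * exp (-kernelPotential n g x z) := by
  rw [pd2_exp_neg_of_update (exp (-z n))
    (g (n + 1) * exp (z (n + 1)) + g (n + 2) * exp (-z (n + 1))) fun t => ?_]
  · simp only [bondDown, bondUp, rightBond, exp_sub, exp_neg]
    ring
  · simp only [kernelPotential, bondSum_update_x g x z t hn le_rfl, rightBond, update_self,
      exp_sub, exp_neg]
    ring

theorem pd2_kernel_z_one (hn : 1 ≤ n) :
    pd2 (fun z' => exp (-kernelPotential n g x z')) 1 z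
      = ((leftBond g z - bondDown x z 1) ^ 2 - (leftBond g z + bondDown x z 1))
          * exp (-kernelPotential n g x z) := by
  rw [pd2_exp_neg_of_update (g 1) (exp (x 1)) fun t => ?_]
  · simp only [leftBond, bondDown, exp_sub, exp_neg]
    ring
  · simp only [kernelPotential, bondSum_update_z_one g x z t hn, leftBond, rightBond,
      update_self, update_of_ne (by omega : n + 1 ≠ 1)]
    ring

theorem pd2_kernel_z_succ {i : ℕ} (h1 : 1 ≤ i) (hi : i < n) :
    pd2 (fun z' => exp (-kernelPotential n g x z')) (i + 1) z
      = ((bondUp g x z i - bondDown x z (i + 1)) ^ 2 - (bondUp g x z i + bondDown x z (i + 1)))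
          * exp (-kernelPotential n g x z) := by
  rw [pd2_exp_neg_of_update (g (i + 1) * exp (-x i)) (exp (x (i + 1))) fun t => ?_]
  · simp only [bondDown, bondUp, exp_sub, exp_neg]
    ring
  · simp only [kernelPotential, bondSum_update_z_succ g x z t h1 hi, leftBond, rightBond,
      update_of_ne (by omega : 1 ≠ i + 1), update_of_ne (by omega : n + 1 ≠ i + 1)]
    ring

theorem pd2_kernel_z_last (hn : 1 ≤ n) :
    pd2 (fun z' => exp (-kernelPotential n g x z')) (n + 1) z
      = ((bondUp g x z n - rightBond n g x z) ^ 2 - (bondUp g x z n + rightBond n g x z))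
          * exp (-kernelPotential n g x z) := by
  rw [pd2_exp_neg_of_update (g (n + 1) * exp (-x n)) (g (n + 2) * exp (-x n)) fun t => ?_]
  · simp only [bondUp, rightBond, exp_sub, exp_neg]
    ring
  · simp only [kernelPotential, bondSum_update_z_last g x z t hn, leftBond, rightBond,
      update_self, update_of_ne (by omega : 1 ≠ n + 1), exp_sub, exp_neg]
    ring

variable (m : ℕ)

theorem todaPotentialA2n_eq_bonds :
    todaPotentialA2n (m + 1) g x = leftBond g z * bondDown x z 1
      + ∑ i ∈ Icc 1 m, bondUp g x z i * bondDown x z (i + 1)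
      + 2 * bondUp g x z (m + 1) * rightBond (m + 1) g x z := by
  have hleft : g 1 * exp (x 1) = leftBond g z * bondDown x z 1 := by
    rw [leftBond, bondDown, mul_assoc, ← exp_add]; ring_nf
  have hbulk : ∑ i ∈ Icc 1 m, g (i + 1) * exp (x (i + 1) - x i)
      = ∑ i ∈ Icc 1 m, bondUp g x z i * bondDown x z (i + 1) :=
    sum_congr rfl fun i _ => by rw [bondUp, bondDown, mul_assoc, ← exp_add]; ring_nf
  have hright : 2 * g (m + 1 + 1) * g (m + 1 + 2) * exp (-2 * x (m + 1))
      = 2 * bondUp g x z (m + 1) * rightBond (m + 1) g x z := by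
    rw [bondUp, rightBond, show -2 * x (m + 1) = (z (m + 1 + 1) - x (m + 1))
      + (-z (m + 1 + 1) - x (m + 1)) by ring, exp_add]
    ring
  rw [todaPotentialA2n, Nat.add_sub_cancel, hleft, hbulk, hright]

theorem todaPotentialBC_eq_bonds :
    todaPotentialBC (m + 1) g z = -(leftBond g z / 2) + leftBond g z ^ 2 / 2
      + ∑ i ∈ Icc 1 (m + 1), bondDown x z i * bondUp g x z i
      + bondDown x z (m + 1) * rightBond (m + 1) g x z := by
  have hleft : g 1 ^ 2 / 2 * exp (2 * z 1) = leftBond g z ^ 2 / 2 := by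
    rw [leftBond, two_mul, exp_add]; ring
  have hbulk : ∑ i ∈ Icc 1 (m + 1), g (i + 1) * exp (z (i + 1) - z i)
      = ∑ i ∈ Icc 1 (m + 1), bondDown x z i * bondUp g x z i :=
    sum_congr rfl fun i _ => by rw [bondUp, bondDown, mul_left_comm, ← exp_add]; ring_nf
  have hright : g (m + 1 + 2) * exp (-z (m + 1 + 1) - z (m + 1))
      = bondDown x z (m + 1) * rightBond (m + 1) g x z := by
    rw [bondDown, rightBond, mul_left_comm, ← exp_add]; ring_nf
  rw [todaPotentialBC, hleft, hbulk, hright, leftBond]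
  ring

theorem sum_pd2_kernel_x :
    ∑ i ∈ Icc 1 (m + 1), pd2 (fun x' => exp (-kernelPotential (m + 1) g x' z)) i x
      = (∑ i ∈ Icc 1 m, ((bondDown x z i - bondUp g x z i) ^ 2 - (bondDown x z i + bondUp g x z i))
        + ((bondDown x z (m + 1) - bondUp g x z (m + 1) - rightBond (m + 1) g x z) ^ 2
          - (bondDown x z (m + 1) + bondUp g x z (m + 1) + rightBond (m + 1) g x z)))
        * exp (-kernelPotential (m + 1) g x z) := by
  rw [sum_Icc_succ_top (by omega), pd2_kernel_x_last g x z (by omega), add_mul, sum_mul]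
  congr 1
  exact sum_congr rfl fun i hi => pd2_kernel_x_of_lt g x z (mem_Icc.mp hi).1
    (by have := (mem_Icc.mp hi).2; omega)

theorem sum_pd2_kernel_z :
    ∑ i ∈ Icc 1 (m + 1 + 1), pd2 (fun z' => exp (-kernelPotential (m + 1) g x z')) i z
      = (((leftBond g z - bondDown x z 1) ^ 2 - (leftBond g z + bondDown x z 1))
        + ∑ i ∈ Icc 1 m, ((bondUp g x z i - bondDown x z (i + 1)) ^ 2
          - (bondUp g x z i + bondDown x z (i + 1)))
        + ((bondUp g x z (m + 1) - rightBond (m + 1) g x z) ^ 2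
          - (bondUp g x z (m + 1) + rightBond (m + 1) g x z)))
        * exp (-kernelPotential (m + 1) g x z) := by
  rw [sum_Icc_succ_top (by omega), sum_Icc_one_succ_eq_add_sum_succ,
    pd2_kernel_z_one g x z (by omega), pd2_kernel_z_last g x z (by omega), add_mul, add_mul,
    sum_mul]
  congr 2
  exact sum_congr rfl fun i hi => pd2_kernel_z_succ g x z (mem_Icc.mp hi).1
    (by have := (mem_Icc.mp hi).2; omega)

end Kernel

theorem kernel_intertwines {n : ℕ} (hn : 1 ≤ n) (g x z : ℕ → ℝ) :
    -(1 / 2) * ∑ i ∈ Icc 1 n, pd2 (fun x' => exp (-kernelPotential n g x' z)) i x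
        + todaPotentialA2n n g x * exp (-kernelPotential n g x z)
      = -(1 / 2) * ∑ i ∈ Icc 1 (n + 1), pd2 (fun z' => exp (-kernelPotential n g x z')) i z
        + todaPotentialBC n g z * exp (-kernelPotential n g x z) := by
  obtain ⟨m, rfl⟩ : ∃ m, n = m + 1 := ⟨n - 1, by omega⟩
  rw [sum_pd2_kernel_x, sum_pd2_kernel_z, todaPotentialA2n_eq_bonds g x z m,
    todaPotentialBC_eq_bonds g x z m]
  linear_combination exp (-kernelPotential (m + 1) g x z)
    * chain_identity m (bondDown x z) (bondUp g x z) (leftBond g z) (rightBond (m + 1) g x z)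

/-- The elementary kernel intertwining the twisted affine `A_{2n}^{(2)}` Toda chain with the
affine non-reduced `BC'_{n+1}` Toda chain, pointwise. -/
theorem stmt_12 (n : ℕ) (hn : 2 ≤ n) (g : ℕ → ℝ) :
    let Q : (ℕ → ℝ) → (ℕ → ℝ) → ℝ := fun x z =>
      Real.exp (-(g 1 * Real.exp (z 1))
        - (∑ i ∈ Finset.Icc 1 n, (Real.exp (x i - z i) + g (i + 1) * Real.exp (z (i + 1) - x i)))
        - g (n + 2) * Real.exp (-z (n + 1) - x n))
    ∀ x z : ℕ → ℝ,
      -(1 / 2) * (∑ i ∈ Finset.Icc 1 n, pd2 (fun x' => Q x' z) i x)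
          + (g 1 * Real.exp (x 1)
              + (∑ i ∈ Finset.Icc 1 (n - 1), g (i + 1) * Real.exp (x (i + 1) - x i))
              + 2 * g (n + 1) * g (n + 2) * Real.exp (-2 * x n)) * Q x z
        = -(1 / 2) * (∑ i ∈ Finset.Icc 1 (n + 1), pd2 (fun z' => Q x z') i z)
          + (-(g 1 / 2) * Real.exp (z 1) + g 1 ^ 2 / 2 * Real.exp (2 * z 1)
              + (∑ i ∈ Finset.Icc 1 n, g (i + 1) * Real.exp (z (i + 1) - z i))
              + g (n + 2) * Real.exp (-z (n + 1) - z n)) * Q x z := by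
  intro Q x z
  have hQ : Q = fun x z => exp (-kernelPotential n g x z) := by
    funext x z
    simp only [Q, kernelPotential, bondSum, leftBond, bondDown, bondUp, rightBond]
    congr 1
    ring
  simp only [hQ]
  exact kernel_intertwines (by omega) g x z
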